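/- Let (X, Π) be a weighted pure d-dimensional simplicial complex and let 0 ≤ a < b ≤ d−1. Then λ₂(U_{a,b}) ≤ ∏_{j=0}^{b−a−1} λ₂(P∧_{a+j}); that is, the second eigenvalue of the up-down walk through dimension b is at most the product of the second eigenvalues of the intermediate one-step up-down walks. -/

import Mathlib

open Finset

/-- A weighted pure `d`-dimensional simplicial complex on a finite ground set `V`.
Faces are finsets; a face of cardinality `m` has dimension `m - 1` (so `X(j)` is the
set of faces of cardinality `j + 1`).  The family of faces is downward closed, every
face is contained in a face of cardinality `d + 1` (purity), and a probability
distribution `Π = Π_d` (positive weights summing to `1`) is given on the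
top-dimensional faces. -/
structure WSC (V : Type*) [DecidableEq V] [Fintype V] (d : ℕ) where
  faces : Finset (Finset V)
  empty_mem : ∅ ∈ faces
  down_closed : ∀ β ∈ faces, ∀ α ⊆ β, α ∈ faces
  pure : ∀ α ∈ faces, ∃ β ∈ faces, α ⊆ β ∧ β.card = d + 1
  dim_le : ∀ α ∈ faces, α.card ≤ d + 1
  weight : Finset V → ℝ
  weight_pos : ∀ β ∈ faces, β.card = d + 1 → 0 < weight β
  weight_zero : ∀ β : Finset V, β ∉ faces ∨ β.card ≠ d + 1 → weight β = 0
  weight_sum : ∑ β ∈ faces.filter (fun β => β.card = d + 1), weight β = 1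

namespace WSC

variable {V : Type*} [DecidableEq V] [Fintype V] {d : ℕ}

/-- Auxiliary recursion for the marginal distributions: `Waux X t` is the marginal
distribution `Π_{d - t}` on faces of cardinality `d + 1 - t`, defined by
`Π_j(α) = (1/(j+2)) ∑_{β ∈ X(j+1), β ⊇ α} Π_{j+1}(β)`. -/
noncomputable def Waux (X : WSC V d) : ℕ → Finset V → ℝ
  | 0 => X.weight
  | (t + 1) => fun α =>
      (1 / ((d + 1 - t : ℕ) : ℝ)) *
        ∑ β ∈ X.faces.filter (fun β => α ⊆ β ∧ β.card = d + 1 - t), X.Waux t β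

/-- `X.W m α` is the marginal probability `Π_{m-1}(α)` of the face `α` of cardinality
`m` (dimension `m - 1`). -/
noncomputable def W (X : WSC V d) (m : ℕ) : Finset V → ℝ := X.Waux (d + 1 - m)

/-- The inner product `⟨f, g⟩_{Π_{m-1}}` on `ℝ^{X(m-1)}` (faces of cardinality `m`). -/
noncomputable def inn (X : WSC V d) (m : ℕ) (f g : Finset V → ℝ) : ℝ :=
  ∑ α ∈ X.faces.filter (fun α => α.card = m), X.W m α * f α * g α

/-- The up operator `U_j`: `(U_j f)(β) = (1/(j+2)) ∑_{x ∈ β} f(β \ {x})`, for `β` of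
cardinality `j + 2`.  (The formula is uniform in the cardinality of `β`.) -/
noncomputable def upOp (f : Finset V → ℝ) : Finset V → ℝ :=
  fun β => (1 / (β.card : ℝ)) * ∑ x ∈ β, f (β.erase x)

/-- The down operator `D_{j+1}`:
`(D_{j+1} g)(α) = ∑_{β ∈ X(j+1), β ⊇ α} Π_{j+1}(β) g(β) / ((j+2) Π_j(α))`, for `α` of
cardinality `j + 1`.  (The formula is uniform in the cardinality of `α`.) -/
noncomputable def downOp (X : WSC V d) (g : Finset V → ℝ) : Finset V → ℝ :=
  fun α => ∑ β ∈ X.faces.filter (fun β => α ⊆ β ∧ β.card = α.card + 1),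
      (X.W (α.card + 1) β * g β) / (((α.card : ℝ) + 1) * X.W α.card α)

/-- The down-up walk `P∨_k = U_{k-1} D_k`, acting on functions on `X(k)` (faces of
cardinality `k + 1`). -/
noncomputable def downUp (X : WSC V d) (f : Finset V → ℝ) : Finset V → ℝ :=
  upOp (X.downOp f)

/-- The up-down walk `P∧_k = D_{k+1} U_k`, acting on functions on `X(k)` (faces of
cardinality `k + 1`). -/
noncomputable def upDown (X : WSC V d) (f : Finset V → ℝ) : Finset V → ℝ :=
  X.downOp (upOp f)

/-- The `k`-th non-lazy up-down walk `N_k = ((k+2)/(k+1)) (P∧_k - (1/(k+2)) I)`. -/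
noncomputable def nonLazy (X : WSC V d) (k : ℕ) (f : Finset V → ℝ) : Finset V → ℝ :=
  fun α => (((k : ℝ) + 2) / ((k : ℝ) + 1)) * (X.upDown f α - (1 / ((k : ℝ) + 2)) * f α)

/-- The up-down walk `U_{a,b} = D_{a+1} ⋯ D_b · U_{b-1} ⋯ U_a` on `X(a)` through
`X(b)`, where `t = b - a`. -/
noncomputable def upDownAB (X : WSC V d) (t : ℕ) (f : Finset V → ℝ) : Finset V → ℝ :=
  (X.downOp)^[t] (upOp^[t] f)

/-- The second largest eigenvalue of a row-stochastic operator `M` on `ℝ^{X(m-1)}`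
(faces of cardinality `m`) which is self-adjoint with respect to `⟨·,·⟩_{Π_{m-1}}`
and has stationary distribution `Π_{m-1}`: by the variational principle it is the
supremum of the Rayleigh quotients of (nonzero) functions orthogonal to the
constant function `1`. -/
noncomputable def lam2 (X : WSC V d) (m : ℕ) (M : (Finset V → ℝ) → Finset V → ℝ) : ℝ :=
  sSup { r : ℝ | ∃ f : Finset V → ℝ,
    X.inn m f (fun _ => 1) = 0 ∧ X.inn m f f ≠ 0 ∧
    r = X.inn m f (M f) / X.inn m f f }

/-- The vertices of the link `X_α`: those `x ∉ α` with `α ∪ {x} ∈ X`. -/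
def linkVerts (X : WSC V d) (α : Finset V) : Finset V :=
  Finset.univ.filter (fun x => x ∉ α ∧ insert x α ∈ X.faces)

/-- The link distribution `Π^α_l(τ) = Π_{j+1+l}(α ∪ τ) / (C(|α ∪ τ|, |α|) · Π_j(α))`
for a face `α` of dimension `j` and `τ ∈ X_α(l)`. -/
noncomputable def linkPi (X : WSC V d) (α τ : Finset V) : ℝ :=
  X.W (α ∪ τ).card (α ∪ τ) / ((Nat.choose (α ∪ τ).card α.card : ℝ) * X.W α.card α)

/-- The random walk matrix `M_α` of the graph of the link `X_α`, with entries
`M_α(x, y) = Π^α_1({x, y}) / (2 Π^α_0(x))` for `{x, y} ∈ X_α(1)` and `0` otherwise,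
viewed as an operator on functions on the vertices of the link. -/
noncomputable def linkWalk (X : WSC V d) (α : Finset V) (f : V → ℝ) : V → ℝ :=
  fun x => ∑ y ∈ (X.linkVerts α).filter
      (fun y => y ≠ x ∧ insert y (insert x α) ∈ X.faces),
    (X.linkPi α {x, y} / (2 * X.linkPi α {x})) * f y

/-- The projector `J_α` onto the constant functions on the link: `J_α g` is the
constant function with value `E_{x ∼ Π^α_0}[g(x)]`. -/
noncomputable def linkJ (X : WSC V d) (α : Finset V) (g : V → ℝ) : V → ℝ :=
  fun _ => ∑ x ∈ X.linkVerts α, X.linkPi α {x} * g x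

/-- The inner product `⟨g, h⟩_{Π^α_0}` on functions on the vertices of the link. -/
noncomputable def linkInner (X : WSC V d) (α : Finset V) (g h : V → ℝ) : ℝ :=
  ∑ x ∈ X.linkVerts α, X.linkPi α {x} * g x * h x

/-- The second largest eigenvalue `λ₂(M_α)` of the random walk matrix of the graph
of the link `X_α`, via the variational principle. -/
noncomputable def linkLam2 (X : WSC V d) (α : Finset V) : ℝ :=
  sSup { r : ℝ | ∃ f : V → ℝ,
    X.linkInner α f (fun _ => 1) = 0 ∧ X.linkInner α f f ≠ 0 ∧
    r = X.linkInner α f (X.linkWalk α f) / X.linkInner α f f }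

/-- `X.gammaC m` is `γ_{m-1} = max_{α ∈ X(m-1)} λ₂(M_α)`, the maximum over faces `α`
of cardinality `m` (dimension `m - 1`) of the second eigenvalue of the link walk. -/
noncomputable def gammaC (X : WSC V d) (m : ℕ) : ℝ :=
  sSup { r : ℝ | ∃ α ∈ X.faces, α.card = m ∧ r = X.linkLam2 α }

end WSC

/-!
Write `U_{a,b} = D U_{a+1,b} U`. Since `D` is the adjoint of `U`, the quadratic form of `U_{a,b}`
at `f` equals that of `U_{a+1,b}` at `U f`, and `U f` is again orthogonal to the constants
because `D 1 = 1`. Hence `⟨f, U_{a,b} f⟩ ≤ λ₂(U_{a+1,b}) ‖U f‖² = λ₂(U_{a+1,b}) ⟨f, P∧_a f⟩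
≤ λ₂(U_{a+1,b}) λ₂(P∧_a) ‖f‖²`, and induction on `b - a` gives the product. All these second
eigenvalues are nonnegative and at most `1`, as `U` is a contraction (Cauchy–Schwarz on each
face).
-/

namespace WSC

lemma upOp_sq_le {V : Type*} [DecidableEq V] (f : Finset V → ℝ) (β : Finset V) :
    upOp f β ^ 2 ≤ (∑ x ∈ β, f (β.erase x) ^ 2) / β.card := by
  rw [upOp, one_div_mul_eq_div]
  exact sum_div_card_sq_le_sum_sq_div_card

variable {V : Type*} [DecidableEq V] [Fintype V] {d : ℕ} (X : WSC V d)

lemma exists_superset_card_succ {α : Finset V} (hα : α ∈ X.faces) (h : α.card ≤ d) :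
    ∃ β ∈ X.faces, α ⊆ β ∧ β.card = α.card + 1 := by
  obtain ⟨γ, hγ, hαγ, hγc⟩ := X.pure α hα
  obtain ⟨x, hxγ, hxα⟩ := exists_mem_notMem_of_card_lt_card (s := α) (t := γ) (by omega)
  exact ⟨insert x α, X.down_closed γ hγ _ (insert_subset hxγ hαγ), subset_insert _ _,
    card_insert_of_notMem hxα⟩

lemma Waux_pos : ∀ t, ∀ α ∈ X.faces, α.card + t = d + 1 → 0 < X.Waux t α
  | 0, α, hα, hc => X.weight_pos α hα hc
  | t + 1, α, hα, hc => by
    obtain ⟨β, hβ, hαβ, hβc⟩ := X.exists_superset_card_succ hα (by omega)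
    have hsum :
        0 < ∑ β ∈ X.faces.filter (fun β => α ⊆ β ∧ β.card = d + 1 - t), X.Waux t β :=
      sum_pos (fun γ hγ => (mem_filter.1 hγ).elim fun hγ hγc => Waux_pos t γ hγ (by omega))
        ⟨β, mem_filter.2 ⟨hβ, hαβ, by omega⟩⟩
    have hcard : (0 : ℝ) < ((d + 1 - t : ℕ) : ℝ) := Nat.cast_pos.2 (by omega)
    simp only [Waux]
    positivity

lemma W_pos {m : ℕ} {α : Finset V} (hα : α ∈ X.faces) (hc : α.card = m) : 0 < X.W m α :=
  X.Waux_pos _ α hα (by have := X.dim_le α hα; omega)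

lemma sum_W_superset {m : ℕ} (hm : m ≤ d) (α : Finset V) :
    ∑ β ∈ X.faces.filter (fun β => α ⊆ β ∧ β.card = m + 1), X.W (m + 1) β
      = ((m : ℝ) + 1) * X.W m α := by
  obtain ⟨k, rfl⟩ : ∃ k, d = m + k := ⟨d - m, by omega⟩
  have hWm : X.W m α = X.Waux (k + 1) α := congrArg (X.Waux · α) (by omega)
  have hWm1 : X.W (m + 1) = X.Waux k := congrArg X.Waux (by omega)
  have hcard : m + k + 1 - k = m + 1 := by omega
  rw [hWm, hWm1, Waux, hcard]
  push_cast
  field_simp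

lemma W_mul_self_nonneg {m : ℕ} {α : Finset V}
    (hα : α ∈ X.faces.filter (fun α => α.card = m)) (x : ℝ) : 0 ≤ X.W m α * x * x := by
  rw [mul_assoc]
  exact mul_nonneg (X.W_pos (mem_filter.1 hα).1 (mem_filter.1 hα).2).le (mul_self_nonneg x)

lemma inn_self_nonneg (m : ℕ) (f : Finset V → ℝ) : 0 ≤ X.inn m f f :=
  sum_nonneg fun _ hα => X.W_mul_self_nonneg hα _

lemma inn_eq_zero_of_inn_self_eq_zero {m : ℕ} {f : Finset V → ℝ} (hf : X.inn m f f = 0)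
    (g : Finset V → ℝ) : X.inn m f g = 0 := by
  refine sum_eq_zero fun α hα => ?_
  have hfα := (sum_eq_zero_iff_of_nonneg fun _ hβ => X.W_mul_self_nonneg hβ _).1 hf α hα
  have hW := (X.W_pos (mem_filter.1 hα).1 (mem_filter.1 hα).2).ne'
  rw [mul_assoc, mul_eq_zero, or_iff_right hW, mul_self_eq_zero] at hfα
  rw [hfα, mul_zero, zero_mul]

lemma inn_eq_zero_of_dim_lt {m : ℕ} (hm : d + 1 < m) (f g : Finset V → ℝ) : X.inn m f g = 0 := by
  refine sum_eq_zero fun α hα => absurd (X.dim_le α (mem_filter.1 hα).1) ?_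
  rw [(mem_filter.1 hα).2]
  omega

lemma filter_subset_card_eq_image_erase {β : Finset V} (hβ : β ∈ X.faces) {m : ℕ}
    (hc : β.card = m + 1) :
    X.faces.filter (fun α => α ⊆ β ∧ α.card = m) = β.image β.erase := by
  ext α
  simp only [mem_filter, mem_image]
  constructor
  · rintro ⟨-, hαβ, hαc⟩
    obtain ⟨x, hxα, rfl⟩ := exists_eq_insert_iff.2 ⟨hαβ, by omega⟩
    exact ⟨x, mem_insert_self x α, erase_insert hxα⟩
  · rintro ⟨x, hx, rfl⟩
    exact ⟨X.down_closed β hβ _ (erase_subset x β), erase_subset x β,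
      by rw [card_erase_of_mem hx, hc]; rfl⟩

lemma sum_sum_superset_eq_sum_sum_erase (m : ℕ) (F : Finset V → Finset V → ℝ) :
    ∑ α ∈ X.faces.filter (fun α => α.card = m),
      ∑ β ∈ X.faces.filter (fun β => α ⊆ β ∧ β.card = m + 1), F α β
    = ∑ β ∈ X.faces.filter (fun β => β.card = m + 1), ∑ x ∈ β, F (β.erase x) β := by
  rw [sum_comm' (t' := X.faces.filter (fun β => β.card = m + 1))
    (s' := fun β => X.faces.filter (fun α => α ⊆ β ∧ α.card = m))
    (fun α β => by simp only [mem_filter]; tauto)]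
  refine sum_congr rfl fun β hβ => ?_
  rw [X.filter_subset_card_eq_image_erase (mem_filter.1 hβ).1 (mem_filter.1 hβ).2,
    sum_image β.erase_injOn]

theorem inn_downOp (m : ℕ) (f g : Finset V → ℝ) :
    X.inn m f (X.downOp g) = X.inn (m + 1) (upOp f) g := by
  have hm : ((m : ℝ) + 1) ≠ 0 := by positivity
  calc X.inn m f (X.downOp g)
      = ∑ α ∈ X.faces.filter (fun α => α.card = m),
          ∑ β ∈ X.faces.filter (fun β => α ⊆ β ∧ β.card = m + 1),
            f α * (X.W (m + 1) β * g β) / ((m : ℝ) + 1) := by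
        refine sum_congr rfl fun α hα => ?_
        obtain ⟨hαX, rfl⟩ := mem_filter.1 hα
        have hW := (X.W_pos hαX rfl).ne'
        rw [downOp, mul_sum]
        refine sum_congr rfl fun β _ => ?_
        field_simp
    _ = ∑ β ∈ X.faces.filter (fun β => β.card = m + 1), ∑ x ∈ β,
          f (β.erase x) * (X.W (m + 1) β * g β) / ((m : ℝ) + 1) :=
        X.sum_sum_superset_eq_sum_sum_erase m _
    _ = X.inn (m + 1) (upOp f) g := by
        refine sum_congr rfl fun β hβ => ?_
        rw [upOp, (mem_filter.1 hβ).2, ← sum_div, ← sum_mul]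
        push_cast
        ring

theorem inn_upOp_self_le (m : ℕ) (f : Finset V → ℝ) :
    X.inn (m + 1) (upOp f) (upOp f) ≤ X.inn m f f := by
  rcases lt_or_ge d m with hdm | hmd
  · rw [X.inn_eq_zero_of_dim_lt (by omega)]
    exact X.inn_self_nonneg m f
  calc X.inn (m + 1) (upOp f) (upOp f)
      ≤ ∑ β ∈ X.faces.filter (fun β => β.card = m + 1), ∑ x ∈ β,
          X.W (m + 1) β * f (β.erase x) ^ 2 / ((m : ℝ) + 1) := by
        refine sum_le_sum fun β hβ => ?_
        obtain ⟨hβX, hβc⟩ := mem_filter.1 hβ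
        have h := mul_le_mul_of_nonneg_left (upOp_sq_le f β) (X.W_pos hβX hβc).le
        rw [hβc] at h
        push_cast at h
        rw [mul_assoc, ← sq]
        exact h.trans_eq (by rw [mul_div_assoc', mul_sum, sum_div])
    _ = ∑ α ∈ X.faces.filter (fun α => α.card = m),
          ∑ β ∈ X.faces.filter (fun β => α ⊆ β ∧ β.card = m + 1),
            X.W (m + 1) β * f α ^ 2 / ((m : ℝ) + 1) :=
        (X.sum_sum_superset_eq_sum_sum_erase m
          fun α β => X.W (m + 1) β * f α ^ 2 / ((m : ℝ) + 1)).symm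
    _ = X.inn m f f := by
        refine sum_congr rfl fun α _ => ?_
        rw [← sum_div, ← sum_mul, X.sum_W_superset hmd]
        field_simp

lemma downOp_one {α : Finset V} (hα : α ∈ X.faces) (hαd : α.card ≤ d) :
    X.downOp (fun _ => 1) α = 1 := by
  have hW := (X.W_pos hα rfl).ne'
  have hm : ((α.card : ℝ) + 1) ≠ 0 := by positivity
  simp only [downOp, mul_one]
  rw [← sum_div, X.sum_W_superset hαd]
  field_simp

lemma inn_upOp_one_eq_zero {m : ℕ} {f : Finset V → ℝ} (hf : X.inn m f (fun _ => 1) = 0) :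
    X.inn (m + 1) (upOp f) (fun _ => 1) = 0 := by
  rcases lt_or_ge d m with hdm | hmd
  · exact X.inn_eq_zero_of_dim_lt (by omega) _ _
  rw [← X.inn_downOp, ← hf]
  refine sum_congr rfl fun α hα => ?_
  rw [X.downOp_one (mem_filter.1 hα).1 ((mem_filter.1 hα).2.trans_le hmd)]

section lam2

variable {m : ℕ} {M : (Finset V → ℝ) → Finset V → ℝ}

lemma lam2_nonneg (hM : ∀ f, 0 ≤ X.inn m f (M f)) : 0 ≤ X.lam2 m M :=
  Real.sSup_nonneg fun _ ⟨f, _, _, hr⟩ =>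
    hr ▸ div_nonneg (hM f) (X.inn_self_nonneg m f)

lemma lam2_le {c : ℝ} (hc : 0 ≤ c)
    (h : ∀ f, X.inn m f (fun _ => 1) = 0 → X.inn m f (M f) ≤ c * X.inn m f f) :
    X.lam2 m M ≤ c :=
  Real.sSup_le (fun _ ⟨f, hf1, hff, hr⟩ => hr ▸ (div_le_iff₀ (lt_of_le_of_ne
    (X.inn_self_nonneg m f) (Ne.symm hff))).2 (h f hf1)) hc

lemma inn_le_lam2_mul (hM : ∀ f, X.inn m f (M f) ≤ X.inn m f f) {f : Finset V → ℝ}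
    (hf : X.inn m f (fun _ => 1) = 0) : X.inn m f (M f) ≤ X.lam2 m M * X.inn m f f := by
  rcases eq_or_ne (X.inn m f f) 0 with hff | hff
  · rw [hff, mul_zero, X.inn_eq_zero_of_inn_self_eq_zero hff]
  have hpos := lt_of_le_of_ne (X.inn_self_nonneg m f) (Ne.symm hff)
  have hbdd : BddAbove { r : ℝ | ∃ f : Finset V → ℝ,
      X.inn m f (fun _ => 1) = 0 ∧ X.inn m f f ≠ 0 ∧ r = X.inn m f (M f) / X.inn m f f } :=
    ⟨1, fun _ ⟨g, _, _, hr⟩ => hr ▸ div_le_one_of_le₀ (hM g) (X.inn_self_nonneg m g)⟩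
  exact (div_le_iff₀ hpos).1 (le_csSup hbdd ⟨f, hf, hff, rfl⟩)

end lam2

lemma upDownAB_succ (t : ℕ) (f : Finset V → ℝ) :
    X.upDownAB (t + 1) f = X.downOp (X.upDownAB t (upOp f)) := by
  rw [upDownAB, Function.iterate_succ_apply', Function.iterate_succ_apply, upDownAB]

lemma inn_downOp_iterate (t : ℕ) : ∀ (m : ℕ) (f g : Finset V → ℝ),
    X.inn m f (X.downOp^[t] g) = X.inn (m + t) (upOp^[t] f) g := by
  induction t with
  | zero => exact fun _ _ _ => rfl
  | succ t ih =>
    intro m f g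
    rw [Function.iterate_succ_apply', X.inn_downOp, ih, Function.iterate_succ_apply,
      Nat.add_right_comm, Nat.add_assoc]

lemma inn_upDownAB (t m : ℕ) (f g : Finset V → ℝ) :
    X.inn m f (X.upDownAB t g) = X.inn (m + t) (upOp^[t] f) (upOp^[t] g) :=
  X.inn_downOp_iterate t m f _

lemma inn_upOp_iterate_self_le (t : ℕ) : ∀ (m : ℕ) (f : Finset V → ℝ),
    X.inn (m + t) (upOp^[t] f) (upOp^[t] f) ≤ X.inn m f f := by
  induction t with
  | zero => exact fun _ _ => le_rfl
  | succ t ih =>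
    intro m f
    rw [Function.iterate_succ_apply, ← Nat.add_assoc, Nat.add_right_comm]
    exact (ih (m + 1) (upOp f)).trans (X.inn_upOp_self_le m f)

lemma inn_upDownAB_self_nonneg (t m : ℕ) (f : Finset V → ℝ) :
    0 ≤ X.inn m f (X.upDownAB t f) := by
  rw [X.inn_upDownAB]
  exact X.inn_self_nonneg _ _

lemma inn_upDownAB_self_le (t m : ℕ) (f : Finset V → ℝ) :
    X.inn m f (X.upDownAB t f) ≤ X.inn m f f := by
  rw [X.inn_upDownAB]
  exact X.inn_upOp_iterate_self_le t m f

lemma lam2_upDownAB_nonneg (t m : ℕ) : 0 ≤ X.lam2 m (X.upDownAB t) :=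
  X.lam2_nonneg (X.inn_upDownAB_self_nonneg t m)

theorem lam2_upDownAB_succ_le (t m : ℕ) :
    X.lam2 m (X.upDownAB (t + 1)) ≤ X.lam2 (m + 1) (X.upDownAB t) * X.lam2 m X.upDown := by
  have hrest := X.lam2_upDownAB_nonneg t (m + 1)
  refine X.lam2_le (mul_nonneg hrest (X.lam2_upDownAB_nonneg 1 m)) fun f hf => ?_
  calc X.inn m f (X.upDownAB (t + 1) f)
      = X.inn (m + 1) (upOp f) (X.upDownAB t (upOp f)) := by
        rw [upDownAB_succ, inn_downOp]
    _ ≤ X.lam2 (m + 1) (X.upDownAB t) * X.inn (m + 1) (upOp f) (upOp f) :=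
        X.inn_le_lam2_mul (X.inn_upDownAB_self_le t (m + 1)) (X.inn_upOp_one_eq_zero hf)
    _ = X.lam2 (m + 1) (X.upDownAB t) * X.inn m f (X.upDown f) := by
        rw [upDown, inn_downOp]
    _ ≤ X.lam2 (m + 1) (X.upDownAB t) * (X.lam2 m X.upDown * X.inn m f f) :=
        mul_le_mul_of_nonneg_left (X.inn_le_lam2_mul (X.inn_upDownAB_self_le 1 m) hf) hrest
    _ = X.lam2 (m + 1) (X.upDownAB t) * X.lam2 m X.upDown * X.inn m f f := by ring

theorem lam2_upDownAB_le_prod_lam2_upDown (t : ℕ) : ∀ m : ℕ,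
    X.lam2 m (X.upDownAB t) ≤ ∏ j ∈ range t, X.lam2 (m + j) X.upDown := by
  induction t with
  | zero =>
    intro m
    rw [prod_range_zero]
    exact X.lam2_le zero_le_one fun f _ => (one_mul _).ge
  | succ t ih =>
    intro m
    calc X.lam2 m (X.upDownAB (t + 1))
        ≤ X.lam2 (m + 1) (X.upDownAB t) * X.lam2 m X.upDown := X.lam2_upDownAB_succ_le t m
      _ ≤ (∏ j ∈ range t, X.lam2 (m + 1 + j) X.upDown) * X.lam2 m X.upDown :=
        mul_le_mul_of_nonneg_right (ih (m + 1)) (X.lam2_upDownAB_nonneg 1 m)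
      _ = ∏ j ∈ range (t + 1), X.lam2 (m + j) X.upDown := by
        simp only [prod_range_succ', Nat.add_zero, ← Nat.add_assoc, Nat.add_right_comm m 1]

end WSC

theorem lam2_upDownAB_le_prod_general {V : Type*} [DecidableEq V] [Fintype V] {d : ℕ}
    (X : WSC V d) (a b : ℕ) :
    X.lam2 (a + 1) (X.upDownAB (b - a)) ≤
      ∏ j ∈ Finset.range (b - a), X.lam2 (a + j + 1) X.upDown := by
  simpa only [Nat.add_right_comm] using X.lam2_upDownAB_le_prod_lam2_upDown (b - a) (a + 1)

/-- **Lemma (splitting longer walks).** Let `(X, Π)` be a weighted pure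
`d`-dimensional simplicial complex and `0 ≤ a < b ≤ d-1`.  Then
`λ₂(U_{a,b}) ≤ ∏_{j=0}^{b-a-1} λ₂(P∧_{a+j})`. -/
theorem lam2_upDownAB_le_prod {V : Type*} [DecidableEq V] [Fintype V] {d : ℕ}
    (X : WSC V d) (a b : ℕ) (hab : a < b) (hbd : b < d) :
    X.lam2 (a + 1) (X.upDownAB (b - a)) ≤
      ∏ j ∈ Finset.range (b - a), X.lam2 (a + j + 1) X.upDown :=
  lam2_upDownAB_le_prod_general X a b
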